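/- arXiv:2209.13245 — 4 statements merged into one kernel-verified Lean document; each statement's English description precedes it below -/
import Mathlib

section
/- Let r ∈ (0,1), and let ℓ₀, a, t be nonnegative integers and L a positive integer with (L − ℓ₀ − a − t)/L > r. Suppose [0, L−1] = I₁ ⊔ I₂ is a partition of the integer interval such that: every maximal connected (integer-interval) component of I₂ has length at most ℓ₀ + a + t, and every maximal connected component of I₁ that is bounded on both sides by points of I₂ (or by the left endpoint preceded by I₂) has length at least L − ℓ₀ + 1. Then either I₁ contains a single connected component H with #H > rL, or I₁ has exactly two connected components H₁, H₂ with #H₁ + #H₂ > rL. -/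
/-- `H` is a maximal connected component (a maximal set of consecutive integers) of
the set `S ⊆ ℕ`. -/
def IsIntervalComp (S H : Finset ℕ) : Prop :=
  H.Nonempty ∧ (∃ a b, H = Finset.Icc a b) ∧ H ⊆ S ∧
    ∀ H' : Finset ℕ, (∃ a b, H' = Finset.Icc a b) → H ⊆ H' → H' ⊆ S → H' = H

/-- Every point of a set `S ⊆ [0, L)` lies in a maximal interval component `Icc p q`
with `p - 1 ∉ S` (if `p ≥ 1`) and `q + 1 ∉ S`. -/
lemma comp_exists {S : Finset ℕ} {L : ℕ} (hS : S ⊆ Finset.range L) {x : ℕ} (hx : x ∈ S) :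
    ∃ p q : ℕ, p ≤ x ∧ x ≤ q ∧ IsIntervalComp S (Finset.Icc p q) ∧
      (1 ≤ p → p - 1 ∉ S) ∧ q + 1 ∉ S := by
  classical
  have hxL : x ∈ Finset.range L := hS hx
  have hxx : Finset.Icc x x ⊆ S := by
    rw [Finset.Icc_self, Finset.singleton_subset_iff]; exact hx
  set A := (Finset.range L).filter (fun a => Finset.Icc a x ⊆ S) with hA
  set B := (Finset.range L).filter (fun b => Finset.Icc x b ⊆ S) with hB
  have hxA : x ∈ A := Finset.mem_filter.2 ⟨hxL, hxx⟩
  have hxB : x ∈ B := Finset.mem_filter.2 ⟨hxL, hxx⟩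
  have hAne : A.Nonempty := ⟨x, hxA⟩
  have hBne : B.Nonempty := ⟨x, hxB⟩
  set p := A.min' hAne with hp
  set q := B.max' hBne with hq
  have hpx : p ≤ x := Finset.min'_le A x hxA
  have hxq : x ≤ q := Finset.le_max' B x hxB
  have hpA : p ∈ A := Finset.min'_mem A hAne
  have hqB : q ∈ B := Finset.max'_mem B hBne
  have hpS : Finset.Icc p x ⊆ S := (Finset.mem_filter.1 hpA).2
  have hqS : Finset.Icc x q ⊆ S := (Finset.mem_filter.1 hqB).2
  have hsub : Finset.Icc p q ⊆ S := by
    intro y hy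
    rw [Finset.mem_Icc] at hy
    rcases le_or_gt y x with h | h
    · exact hpS (Finset.mem_Icc.2 ⟨hy.1, h⟩)
    · exact hqS (Finset.mem_Icc.2 ⟨h.le, hy.2⟩)
  refine ⟨p, q, hpx, hxq,
    ⟨⟨x, Finset.mem_Icc.2 ⟨hpx, hxq⟩⟩, ⟨p, q, rfl⟩, hsub, ?_⟩, ?_, ?_⟩
  · rintro H' ⟨c, d, rfl⟩ hsub' hS'
    have hpH : p ∈ Finset.Icc c d :=
      hsub' (Finset.mem_Icc.2 ⟨le_refl p, le_trans hpx hxq⟩)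
    have hqH : q ∈ Finset.Icc c d :=
      hsub' (Finset.mem_Icc.2 ⟨le_trans hpx hxq, le_refl q⟩)
    rw [Finset.mem_Icc] at hpH hqH
    have hcd : c ≤ d := le_trans hpH.1 (le_trans hpx (le_trans hxq hqH.2))
    have hcA : c ∈ A := by
      refine Finset.mem_filter.2 ⟨hS (hS' (Finset.mem_Icc.2 ⟨le_refl c, hcd⟩)), ?_⟩
      intro y hy
      rw [Finset.mem_Icc] at hy
      exact hS' (Finset.mem_Icc.2 ⟨hy.1, le_trans hy.2 (le_trans hxq hqH.2)⟩)
    have hdB : d ∈ B := by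
      refine Finset.mem_filter.2 ⟨hS (hS' (Finset.mem_Icc.2 ⟨hcd, le_refl d⟩)), ?_⟩
      intro y hy
      rw [Finset.mem_Icc] at hy
      exact hS' (Finset.mem_Icc.2 ⟨le_trans (le_trans hpH.1 hpx) hy.1, hy.2⟩)
    have hc : c = p := le_antisymm hpH.1 (Finset.min'_le A c hcA)
    have hd : d = q := le_antisymm (Finset.le_max' B d hdB) hqH.2
    rw [hc, hd]
  · intro hp1 hmem
    have h1 : Finset.Icc (p - 1) x ⊆ S := by
      intro y hy
      rw [Finset.mem_Icc] at hy
      rcases eq_or_lt_of_le hy.1 with h | h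
      · rw [← h]; exact hmem
      · exact hpS (Finset.mem_Icc.2 ⟨by omega, hy.2⟩)
    have hm : p - 1 ∈ A := by
      refine Finset.mem_filter.2 ⟨?_, h1⟩
      rw [Finset.mem_range] at hxL ⊢
      omega
    have := Finset.min'_le A _ hm
    omega
  · intro hmem
    have hq1L : q + 1 ∈ Finset.range L := hS hmem
    have h1 : Finset.Icc x (q + 1) ⊆ S := by
      intro y hy
      rw [Finset.mem_Icc] at hy
      rcases eq_or_lt_of_le hy.2 with h | h
      · rw [h]; exact hmem
      · exact hqS (Finset.mem_Icc.2 ⟨hy.1, by omega⟩)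
    have := Finset.le_max' B _ (Finset.mem_filter.2 ⟨hq1L, h1⟩)
    omega

/-- Combinatorial core of the frequency estimate: if `[0, L-1]` is
partitioned into `I₁ ⊔ I₂` where every component of `I₂` has length at most
`ℓ₀ + a + t`, every component of `I₁` bounded on the left by a point of `I₂` has
length at least `L - ℓ₀ + 1`, and `rL < L - ℓ₀ - a - t`, then either `I₁` contains a
single component `H` with `#H > rL`, or `I₁` has exactly two components whose total
cardinality exceeds `rL`. -/
theorem frequency_combinatorics (r : ℝ) (hr : r ∈ Set.Ioo (0:ℝ) 1)
    (l₀ a t L : ℕ) (hL : 0 < L)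
    (hfrac : r * L < (L : ℝ) - l₀ - a - t)
    (I₁ I₂ : Finset ℕ) (hdisj : Disjoint I₁ I₂) (hunion : I₁ ∪ I₂ = Finset.range L)
    (h₂ : ∀ H, IsIntervalComp I₂ H → H.card ≤ l₀ + a + t)
    (h₁ : ∀ H, IsIntervalComp I₁ H →
      (∃ a' b', H = Finset.Icc a' b' ∧ 1 ≤ a' ∧ a' - 1 ∈ I₂) →
      L - l₀ + 1 ≤ H.card) :
    (∃ H, IsIntervalComp I₁ H ∧ r * L < (H.card : ℝ)) ∨
    (∃ H₁ H₂, IsIntervalComp I₁ H₁ ∧ IsIntervalComp I₁ H₂ ∧ H₁ ≠ H₂ ∧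
      (∀ H, IsIntervalComp I₁ H → H = H₁ ∨ H = H₂) ∧
      r * L < (H₁.card : ℝ) + (H₂.card : ℝ)) := by
  obtain ⟨hr0, hr1⟩ := hr
  have hLR : (0:ℝ) < L := by exact_mod_cast hL
  have hsum : l₀ + a + t < L := by
    have h0 : 0 < r * L := mul_pos hr0 hLR
    have h' : (l₀ : ℝ) + a + t < L := by linarith
    exact_mod_cast h'
  have hsub1 : I₁ ⊆ Finset.range L := by
    rw [← hunion]; exact Finset.subset_union_left
  have hsub2 : I₂ ⊆ Finset.range L := by
    rw [← hunion]; exact Finset.subset_union_right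
  have hmem12 : ∀ y, y < L → y ∉ I₁ → y ∈ I₂ := by
    intro y hy h1
    have hy' : y ∈ I₁ ∪ I₂ := by rw [hunion]; exact Finset.mem_range.2 hy
    rcases Finset.mem_union.1 hy' with h | h
    · exact absurd h h1
    · exact h
  have hnot2 : ∀ y, y ∈ I₁ → y ∉ I₂ := fun y h => Finset.disjoint_left.1 hdisj h
  have hmem21 : ∀ y, y < L → y ∉ I₂ → y ∈ I₁ := by
    intro y hy h2
    have hy' : y ∈ I₁ ∪ I₂ := by rw [hunion]; exact Finset.mem_range.2 hy
    rcases Finset.mem_union.1 hy' with h | h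
    · exact h
    · exact absurd h h2
  have haR : (0:ℝ) ≤ a := Nat.cast_nonneg a
  have htR : (0:ℝ) ≤ t := Nat.cast_nonneg t
  have hlR : (0:ℝ) ≤ l₀ := Nat.cast_nonneg l₀
  -- key step: a point of I₂ followed by a point of I₁ yields a big component of I₁
  have key : ∀ d, d ∈ I₂ → d + 1 ∈ I₁ →
      (∃ H, IsIntervalComp I₁ H ∧ r * L < (H.card : ℝ)) := by
    intro d hd hd1
    obtain ⟨e, f, hed, hdf, hcomp, _, _⟩ := comp_exists hsub1 hd1
    have he : e = d + 1 := by
      by_contra h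
      have hmem : d ∈ Finset.Icc e f := Finset.mem_Icc.2 ⟨by omega, by omega⟩
      exact hnot2 d (hcomp.2.2.1 hmem) hd
    have hcard := h₁ _ hcomp ⟨e, f, rfl, by omega, by rw [he]; simpa using hd⟩
    refine ⟨_, hcomp, ?_⟩
    have h' : L + 1 ≤ (Finset.Icc e f).card + l₀ := by omega
    have h'' : (L:ℝ) + 1 ≤ ((Finset.Icc e f).card : ℝ) + l₀ := by exact_mod_cast h'
    linarith
  have h0L : 0 ∈ Finset.range L := Finset.mem_range.2 hL
  by_cases h01 : 0 ∈ I₁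
  · obtain ⟨p, q, hp0, h0q, hcomp, _, hq1⟩ := comp_exists hsub1 h01
    have hp : p = 0 := Nat.le_zero.1 hp0
    subst hp
    by_cases hq1L : q + 1 < L
    · have hq2 : q + 1 ∈ I₂ := hmem12 _ hq1L hq1
      obtain ⟨c, d, hc, hd, hcomp2, _, hd1⟩ := comp_exists hsub2 hq2
      have hcq : c = q + 1 := by
        by_contra h
        have hmem : q ∈ Finset.Icc c d := Finset.mem_Icc.2 ⟨by omega, by omega⟩
        exact hnot2 q (hcomp.2.2.1 (Finset.mem_Icc.2 ⟨Nat.zero_le q, le_refl q⟩))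
          (hcomp2.2.2.1 hmem)
      by_cases hd1L : d + 1 < L
      · exact Or.inl (key d (hcomp2.2.2.1 (Finset.mem_Icc.2 ⟨by omega, le_refl d⟩))
          (hmem21 _ hd1L hd1))
      · left
        have hcard2 := h₂ _ hcomp2
        rw [Nat.card_Icc] at hcard2
        have hqL : L ≤ q + 1 + (l₀ + a + t) := by omega
        refine ⟨_, hcomp, ?_⟩
        rw [Nat.card_Icc]
        have h'' : (L:ℝ) ≤ ((q + 1 - 0 : ℕ) : ℝ) + (l₀ + a + t) := by
          push_cast
          exact_mod_cast hqL
        push_cast at h'' ⊢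
        linarith
    · left
      refine ⟨_, hcomp, ?_⟩
      rw [Nat.card_Icc]
      have hqL : L ≤ q + 1 - 0 := by omega
      have h'' : (L:ℝ) ≤ ((q + 1 - 0 : ℕ) : ℝ) := by exact_mod_cast hqL
      nlinarith
  · have h02 : 0 ∈ I₂ := hmem12 0 hL h01
    obtain ⟨c, d, hc0, h0d, hcomp2, _, hd1⟩ := comp_exists hsub2 h02
    by_cases hd1L : d + 1 < L
    · exact Or.inl (key d (hcomp2.2.2.1 (Finset.mem_Icc.2 ⟨by omega, le_refl d⟩))
        (hmem21 _ hd1L hd1))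
    · exfalso
      have hcard2 := h₂ _ hcomp2
      rw [Nat.card_Icc] at hcard2
      omega
end

section
/- Let θ : ℝ → [0,1] be a smooth bump function equal to 1 on [−1,1] and to 0 outside (−2+δ₀, 2−δ₀), let f : [−1,1] → ℝ be C¹ with graph contained in the unit disc, let n ≥ 1 and i ∈ {0,…,n³−1}. Let ψ be the time-one map of the vector field X(x,y) = θ(n(y − (i/n³) f(x))) · (f(x)/n³) · ∂/∂y on the unit disc. Then for every x ∈ [−1,1], ψ(x, (i/n³) f(x)) = (x, ((i+1)/n³) f(x)). -/
open Set

/-- The time-one map of the vertical vector field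
`X(x,y) = θ(n(y − (i/n³)f(x)))·(f(x)/n³)·∂/∂y` sends the point `(x, (i/n³)f(x))` to
`(x, ((i+1)/n³)f(x))`: any solution `γ` of the corresponding ODE starting at
`(i/n³)f(x)` reaches `((i+1)/n³)f(x)` at time one (the `x`-coordinate being constant). -/
theorem bump_flow_moves_graph (δ₀ : ℝ) (hδ₀ : 0 < δ₀)
    (θ : ℝ → ℝ) (hθs : ContDiff ℝ (⊤ : ℕ∞) θ)
    (hθ01 : ∀ s, θ s ∈ Icc (0:ℝ) 1)
    (hθ1 : ∀ s ∈ Icc (-1:ℝ) 1, θ s = 1)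
    (hθ0 : ∀ s : ℝ, 2 - δ₀ ≤ |s| → θ s = 0)
    (f : ℝ → ℝ) (hf : ContDiff ℝ 1 f)
    (hgraph : ∀ x ∈ Icc (-1:ℝ) 1, x ^ 2 + (f x) ^ 2 ≤ 1)
    (n : ℕ) (hn : 1 ≤ n) (i : ℕ) (hi : i < n ^ 3)
    (x : ℝ) (hx : x ∈ Icc (-1:ℝ) 1)
    (γ : ℝ → ℝ) (hγ0 : γ 0 = ((i : ℝ) / (n : ℝ) ^ 3) * f x)
    (hγ' : ∀ t ∈ Icc (0:ℝ) 1,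
      HasDerivAt γ
        (θ ((n : ℝ) * (γ t - ((i : ℝ) / (n : ℝ) ^ 3) * f x)) * (f x / (n : ℝ) ^ 3)) t) :
    γ 1 = (((i : ℝ) + 1) / (n : ℝ) ^ 3) * f x := by
  -- notation
  set c : ℝ := ((i : ℝ) / (n : ℝ) ^ 3) * f x with hc
  set k : ℝ := f x / (n : ℝ) ^ 3 with hk
  have hn1 : (1:ℝ) ≤ (n:ℝ) := by exact_mod_cast hn
  have hnpos : (0:ℝ) < (n:ℝ) := by linarith
  -- |f x| ≤ 1
  have hfx : |f x| ≤ 1 := by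
    have h := hgraph x hx
    have hx2 : 0 ≤ x ^ 2 := sq_nonneg x
    have : (f x) ^ 2 ≤ 1 := by nlinarith
    nlinarith [abs_nonneg (f x), sq_abs (f x)]
  -- θ has compact support
  have hsupp : HasCompactSupport θ := by
    apply HasCompactSupport.intro (isCompact_Icc (a := -(2 - δ₀)) (b := 2 - δ₀))
    intro s hs
    apply hθ0
    simp only [mem_Icc, not_and_or, not_le] at hs
    rw [le_abs]
    rcases hs with hs | hs
    · right; linarith
    · left; linarith
  -- θ is Lipschitz
  obtain ⟨C, hC⟩ : ∃ C, LipschitzWith C θ :=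
    hθs.lipschitzWith_of_hasCompactSupport hsupp (by simp)
  -- the vector field is Lipschitz
  set v : ℝ → ℝ := fun y => θ ((n : ℝ) * (y - c)) * k with hv
  have hlip : LipschitzWith (‖k‖₊ * (C * ‖(n:ℝ)‖₊)) v := by
    have h1 : LipschitzWith ‖(n:ℝ)‖₊ (fun y : ℝ => (n:ℝ) * (y - c)) := by
      intro a b
      simp only [edist_dist, Real.dist_eq]
      rw [← ENNReal.ofReal_coe_nnreal, ← ENNReal.ofReal_mul (by positivity)]
      apply ENNReal.ofReal_le_ofReal
      have : (n:ℝ) * (a - c) - (n:ℝ) * (b - c) = (n:ℝ) * (a - b) := by ring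
      rw [this, abs_mul]
      simp [abs_mul]
    have h2 : LipschitzWith ‖k‖₊ (fun s : ℝ => s * k) := by
      intro a b
      simp only [edist_dist, Real.dist_eq]
      rw [← ENNReal.ofReal_coe_nnreal, ← ENNReal.ofReal_mul (by positivity)]
      apply ENNReal.ofReal_le_ofReal
      have : a * k - b * k = (a - b) * k := by ring
      rw [this, abs_mul]
      simp [abs_mul, mul_comm]
    exact h2.comp (hC.comp h1)
  -- the explicit solution
  set g : ℝ → ℝ := fun t => c + t * k with hg
  have hgderiv : ∀ t ∈ Icc (0:ℝ) 1, HasDerivAt g (v (g t)) t := by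
    intro t ht
    have hval : v (g t) = k := by
      have harg : (n : ℝ) * (g t - c) = t * (f x / (n:ℝ)^2) := by
        simp only [hg, hk]
        field_simp
        ring
      have hmem : (n : ℝ) * (g t - c) ∈ Icc (-1:ℝ) 1 := by
        rw [harg, mem_Icc, ← abs_le]
        have hn2 : (1:ℝ) ≤ (n:ℝ)^2 := one_le_pow₀ hn1
        rw [abs_mul, abs_div, abs_of_nonneg (show (0:ℝ) ≤ (n:ℝ)^2 by positivity)]
        have ht1 : |t| ≤ 1 := abs_le.2 ⟨by linarith [ht.1], ht.2⟩
        have hdiv : |f x| / (n:ℝ)^2 ≤ 1 := by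
          rw [div_le_one (by positivity)]; linarith
        calc |t| * (|f x| / (n:ℝ)^2) ≤ 1 * 1 :=
              mul_le_mul ht1 hdiv (by positivity) (by norm_num)
          _ = 1 := by norm_num
      simp only [hv, hθ1 _ hmem, one_mul]
    rw [hval]
    exact (((hasDerivAt_id t).mul_const k).const_add c).congr_deriv (by simp)
  -- uniqueness of solutions
  have huniq : EqOn γ g (Icc 0 1) := by
    apply ODE_solution_unique_of_mem_Icc_right
      (v := fun _ y => v y) (s := fun _ => (univ : Set ℝ))
      (fun _ _ => (hlip.lipschitzOnWith))
      (fun t ht => (hγ' t ht).continuousAt.continuousWithinAt)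
      (fun t ht => ((hγ' t (Ico_subset_Icc_self ht)).hasDerivWithinAt))
      (fun _ _ => mem_univ _)
      (fun t ht => (hgderiv t ht).continuousAt.continuousWithinAt)
      (fun t ht => ((hgderiv t (Ico_subset_Icc_self ht)).hasDerivWithinAt))
      (fun _ _ => mem_univ _)
    rw [hγ0, hg]; simp
  have := huniq (right_mem_Icc.2 (by norm_num : (0:ℝ) ≤ 1))
  rw [this, hg]
  simp only [one_mul, hc, hk]
  ring
end

section
/- Let f : X → X be a homeomorphism of a compact metric space and (U_n) a nested decreasing sequence of compact f-invariant sets such that for every ε > 0 there exists n with: every connected component of U_n has diameter less than ε, and for every pair of components R₁, R₂ of U_n there is a finite sequence of components S₁ = R₁, S₂, …, S_k = R₂ with f(S_i) ∩ S_{i+1} ≠ ∅ for all i. Then C := ⋂_n U_n is chain transitive: for every x, y ∈ C and every ε > 0 there is an ε-pseudo-orbit in X from x to y (a finite sequence x = z₀, z₁, …, z_m = y with d(f(z_i), z_{i+1}) < ε for all i). -/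
open Set

/-- If `(U_n)` is a nested decreasing sequence of compact invariant
sets of a homeomorphism `f` such that for every `ε > 0` some `U_n` has all connected
components of diameter `< ε` and is c-transitive (any two components are linked by a
chain of components with `f(S_i) ∩ S_{i+1} ≠ ∅`), then `C = ⋂ U_n` is chain
transitive: any two points of `C` are joined by an `ε`-pseudo-orbit for every `ε > 0`. -/
theorem nested_cTransitive_chain_transitive {X : Type*} [MetricSpace X] [CompactSpace X]
    (f : X → X) (hfc : Continuous f) (hfb : Function.Bijective f)
    (U : ℕ → Set X)
    (hUcpt : ∀ n, IsCompact (U n)) (hUinv : ∀ n, f '' U n = U n)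
    (hUnest : ∀ n, U (n + 1) ⊆ U n)
    (hc : ∀ ε > (0:ℝ), ∃ n,
      (∀ x ∈ U n, Metric.diam (connectedComponentIn (U n) x) < ε) ∧
      (∀ x ∈ U n, ∀ y ∈ U n, ∃ (l : ℕ) (S : ℕ → Set X),
        (∀ i ≤ l, ∃ z ∈ U n, S i = connectedComponentIn (U n) z) ∧
        S 0 = connectedComponentIn (U n) x ∧ S l = connectedComponentIn (U n) y ∧
        ∀ i < l, (f '' S i ∩ S (i + 1)).Nonempty)) :
    ∀ x ∈ ⋂ n, U n, ∀ y ∈ ⋂ n, U n, ∀ ε > (0:ℝ),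
      ∃ (l : ℕ) (z : ℕ → X), 0 < l ∧ z 0 = x ∧ z l = y ∧
        ∀ i < l, dist (f (z i)) (z (i + 1)) < ε := by
  intro x hx y hy ε hε
  obtain ⟨δ, hδ, hδf⟩ := Metric.uniformContinuous_iff.mp
    (CompactSpace.uniformContinuous_of_continuous hfc) (ε/2) (by linarith)
  set ε' := min δ (ε/2) with hε'
  have hε'pos : 0 < ε' := lt_min hδ (by linarith)
  obtain ⟨n, hdiam, hchain⟩ := hc ε' hε'pos
  have hxU : x ∈ U n := mem_iInter.mp hx n
  have hyU : y ∈ U n := mem_iInter.mp hy n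
  have hfxU : f x ∈ U n := by rw [← hUinv n]; exact mem_image_of_mem f hxU
  obtain ⟨l, S, hScomp, hS0, hSl, hSstep⟩ := hchain (f x) hfxU y hyU
  have hbdd : ∀ i ≤ l, Bornology.IsBounded (S i) :=
    fun i _ => (isCompact_univ.isBounded).subset (subset_univ _)
  have hdiam' : ∀ i ≤ l, ∀ a ∈ S i, ∀ b ∈ S i, dist a b < ε' := by
    intro i hi a ha b hb
    obtain ⟨w, hw, hSw⟩ := hScomp i hi
    calc dist a b ≤ Metric.diam (S i) := Metric.dist_le_diam_of_mem (hbdd i hi) ha hb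
      _ < ε' := by rw [hSw]; exact hdiam w hw
  have hp : ∀ i, ∃ p, i < l → p ∈ S i ∧ f p ∈ S (i+1) := by
    intro i
    by_cases h : i < l
    · obtain ⟨q, hq1, hq2⟩ := hSstep i h
      obtain ⟨p, hp1, hp2⟩ := hq1
      exact ⟨p, fun _ => ⟨hp1, hp2 ▸ hq2⟩⟩
    · exact ⟨x, fun h' => absurd h' h⟩
  choose p hpS using hp
  set z : ℕ → X := fun i => if i = 0 then x else if i = l + 1 then y
    else if i = 1 then f x else f (p (i - 2)) with hz
  have hfx0 : f x ∈ S 0 := by rw [hS0]; exact mem_connectedComponentIn hfxU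
  have hyl : y ∈ S l := by rw [hSl]; exact mem_connectedComponentIn hyU
  have hmemS : ∀ i, 1 ≤ i → i ≤ l → z i ∈ S (i - 1) := by
    intro i h1 h2
    rcases Nat.lt_or_ge i 2 with h | h
    · interval_cases i
      simp only [hz]
      rw [if_neg (by omega), if_neg (by omega)]
      simpa using hfx0
    · have heq : z i = f (p (i - 2)) := by
        simp only [hz]; rw [if_neg (by omega), if_neg (by omega), if_neg (by omega)]
      rw [heq]
      have hm := (hpS (i-2) (by omega)).2
      have heq2 : i - 2 + 1 = i - 1 := by omega
      rwa [heq2] at hm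
  refine ⟨l + 1, z, Nat.succ_pos l, by simp [hz], by simp [hz], ?_⟩
  intro i hi
  rcases Nat.eq_zero_or_pos i with rfl | hipos
  · rcases Nat.eq_zero_or_pos l with rfl | hl
    · have hz1 : z 1 = y := by simp [hz]
      rw [hz1, show z 0 = x by simp [hz]]
      calc dist (f x) y < ε' := hdiam' 0 le_rfl (f x) hfx0 y hyl
        _ ≤ ε := le_trans (min_le_right _ _) (by linarith)
    · have hz1 : z 1 = f x := by
        simp only [hz]; rw [if_neg one_ne_zero, if_neg (by omega)]; simp
      rw [hz1, show z 0 = x by simp [hz]]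
      simpa using hε
  · rcases Nat.lt_or_ge i l with h | h
    · have hi1 : z (i+1) = f (p (i - 1)) := by
        have h2 : i + 1 - 2 = i - 1 := by omega
        simp only [hz]
        rw [if_neg (by omega), if_neg (by omega), if_neg (by omega), h2]
      rw [hi1]
      have hzi : z i ∈ S (i - 1) := hmemS i hipos (le_of_lt h)
      have hpi : p (i - 1) ∈ S (i - 1) := (hpS (i - 1) (by omega)).1
      have hd : dist (z i) (p (i-1)) < δ :=
        lt_of_lt_of_le (hdiam' (i-1) (by omega) _ hzi _ hpi) (min_le_left _ _)
      have := hδf hd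
      linarith
    · have hil : i = l := by omega
      subst hil
      have hz1 : z (i+1) = y := by simp only [hz]; rw [if_neg (by omega)]; simp
      rw [hz1]
      have hzi : z i ∈ S (i - 1) := hmemS i hipos le_rfl
      have hpi : p (i - 1) ∈ S (i - 1) := (hpS (i - 1) (by omega)).1
      have h1 : dist (f (z i)) (f (p (i-1))) < ε/2 := by
        apply hδf
        exact lt_of_lt_of_le (hdiam' (i-1) (by omega) _ hzi _ hpi) (min_le_left _ _)
      have h2 : dist (f (p (i-1))) y < ε/2 := by
        have hfp : f (p (i-1)) ∈ S (i-1+1) := (hpS (i-1) (by omega)).2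
        have heq : i - 1 + 1 = i := by omega
        rw [heq] at hfp
        exact lt_of_lt_of_le (hdiam' i le_rfl _ hfp _ hyl) (min_le_right _ _)
      calc dist (f (z i)) y ≤ dist (f (z i)) (f (p (i-1))) + dist (f (p (i-1))) y :=
            dist_triangle _ _ _
        _ < ε := by linarith
end

section
/- Let (𝒟, F) be a Markov IFS, let A = ⋃_j A_j ⊂ 𝒟 be an attracting region with respect to a relatively repelling region R, with A ⊂ Int(R), and suppose each connected component A_j is a C¹ disc. Then the family of restrictions {f_i|_{A_j} : f_i ∈ F, A_j ⊂ D_{dom(i)}, f_i(A_j) ⊂ R} defines a Markov IFS with discs {A_j}: each such restriction maps its domain disc into the interior of some A_{j'}, and the images of distinct restrictions are pairwise disjoint. -/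
open Set

/-- A Markov iterated function system on finitely many pairwise disjoint compact discs
in the plane: finitely many `C¹` local diffeomorphisms, each sending its domain disc
into the interior of its target disc, with pairwise disjoint images. -/
structure MarkovIFS (m k : ℕ) where
  D : Fin m → Set (ℝ × ℝ)
  f : Fin k → (ℝ × ℝ) → (ℝ × ℝ)
  dom : Fin k → Fin m
  tgt : Fin k → Fin m
  compact : ∀ i, IsCompact (D i)
  nonemptyDiscs : ∀ i, (D i).Nonempty
  disjointDiscs : ∀ i j, i ≠ j → Disjoint (D i) (D j)
  smooth : ∀ j, ContDiffOn ℝ 1 (f j) (D (dom j))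
  inj : ∀ j, Set.InjOn (f j) (D (dom j))
  mapsInto : ∀ j, f j '' D (dom j) ⊆ interior (D (tgt j))
  disjointImages : ∀ j j', j ≠ j' → Disjoint (f j '' D (dom j)) (f j' '' D (dom j'))

namespace MarkovIFS

variable {m k : ℕ} (M : MarkovIFS m k)

/-- The union `𝒟` of the discs of the Markov IFS. -/
def union : Set (ℝ × ℝ) := ⋃ i, M.D i

/-- Admissibility relation on letters: the image of `f a` is contained in the domain disc of `f b`. -/
def AdmRel (a b : Fin k) : Prop := M.f a '' M.D (M.dom a) ⊆ M.D (M.dom b)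

/-- A word is admissible if consecutive letters satisfy the admissibility relation. -/
def Admissible (ω : List (Fin k)) : Prop := ω.Chain' M.AdmRel

/-- The composition `F_ω = f_{j_n} ∘ ⋯ ∘ f_{j_1}` associated to the word `ω = j₁⋯j_n`. -/
def Fword (ω : List (Fin k)) : (ℝ × ℝ) → (ℝ × ℝ) := ω.foldl (fun g j => M.f j ∘ g) id

/-- Membership in the domain appropriate for applying the word `ω`. -/
def inDom : List (Fin k) → (ℝ × ℝ) → Prop
  | [], x => x ∈ M.union
  | j :: _, x => x ∈ M.D (M.dom j)

/-- `p` is fixed by the nonempty admissible word `ω`. -/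
def FixWord (p : ℝ × ℝ) (ω : List (Fin k)) : Prop :=
  ω ≠ [] ∧ M.Admissible ω ∧ M.inDom ω p ∧ M.Fword ω p = p

/-- `p` is a periodic point of period `n`: `n` is the least length of a nonempty
admissible word fixing `p`. -/
def HasPeriod (p : ℝ × ℝ) (n : ℕ) : Prop :=
  (∃ ω, M.FixWord p ω ∧ ω.length = n) ∧ ∀ ω, M.FixWord p ω → n ≤ ω.length

/-- `F^n(𝒟)`, the union of the images of the discs under all admissible words of length `n`. -/
def imageN (n : ℕ) : Set (ℝ × ℝ) :=
  {y | ∃ ω x, M.Admissible ω ∧ ω.length = n ∧ M.inDom ω x ∧ M.Fword ω x = y}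

/-- `F^{-n}(S)`: the set of points sent into `S` by some admissible word of length `n`
(the image of `S ∩ F^n(𝒟)` under the well-defined inverse `F^{-n}`). -/
def preImageN (n : ℕ) (S : Set (ℝ × ℝ)) : Set (ℝ × ℝ) :=
  {x | ∃ ω, M.Admissible ω ∧ ω.length = n ∧ M.inDom ω x ∧ M.Fword ω x ∈ S}

end MarkovIFS

/-- The interior of `R` relative to the subspace `U`. -/
def relIntIn (U R : Set (ℝ × ℝ)) : Set (ℝ × ℝ) :=
  {x | x ∈ U ∧ ∃ ε > 0, Metric.ball x ε ∩ U ⊆ R}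

namespace MarkovIFS

variable {m k : ℕ} (M : MarkovIFS m k)

/-- A compact set `R ⊆ 𝒟` is a relatively repelling region if
`F^{-1}(R ∩ F(𝒟)) ⊆ Int_t(R)`, interior relative to the topology of `𝒟`. -/
def RelRepelling (R : Set (ℝ × ℝ)) : Prop :=
  IsCompact R ∧ R ⊆ M.union ∧ M.preImageN 1 (R ∩ M.imageN 1) ⊆ relIntIn M.union R

end MarkovIFS

/-!
Each `f_i(A_j)` is connected; if it meets `R`, the attracting property puts it in `Int(⋃ A)`.
Since the `A_j` are finitely many, closed and pairwise disjoint, `Int(⋃ A) = ⋃ Int(A_j)` is a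
disjoint union of open sets, so connectedness traps `f_i(A_j)` in a single `Int(A_j')`.
Disjointness of images comes from injectivity of each `f_i` together with the disjoint images
of distinct maps of the original system.
-/

open Function

section Topology

variable {X ι : Type*} [TopologicalSpace X]

theorem interior_iUnion_of_pairwise_disjoint_isClosed [Finite ι] {A : ι → Set X}
    (hA : ∀ i, IsClosed (A i)) (hd : Pairwise (Disjoint on A)) :
    interior (⋃ i, A i) = ⋃ i, interior (A i) := by
  refine Subset.antisymm (fun x hx ↦ ?_) (iUnion_subset fun i ↦ interior_mono (subset_iUnion A i))
  obtain ⟨i, hxi⟩ := mem_iUnion.1 (interior_subset hx)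
  -- Near `x`, the other (finitely many, closed) pieces are absent, so only `A i` remains.
  have hrest : IsClosed (⋃ (j) (_ : j ≠ i), A j) :=
    isClosed_iUnion_of_finite fun j ↦ isClosed_iUnion_of_finite fun _ ↦ hA j
  have hsub : interior (⋃ j, A j) \ ⋃ (j) (_ : j ≠ i), A j ⊆ A i := by
    rintro y ⟨hy, hy'⟩
    obtain ⟨j, hyj⟩ := mem_iUnion.1 (interior_subset hy)
    by_cases hji : j = i
    · exact hji ▸ hyj
    · exact absurd (mem_iUnion₂.2 ⟨j, hji, hyj⟩) hy'
  have hxrest : x ∉ ⋃ (j) (_ : j ≠ i), A j := by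
    simp only [mem_iUnion, not_exists]
    exact fun j hji hxj ↦ disjoint_left.1 (hd hji) hxj hxi
  exact mem_iUnion.2 ⟨i, interior_maximal hsub (isOpen_interior.sdiff hrest) ⟨hx, hxrest⟩⟩

theorem IsPreconnected.exists_subset_of_subset_iUnion {s : Set X} {U : ι → Set X}
    (hs : IsPreconnected s) (hne : s.Nonempty) (hU : ∀ i, IsOpen (U i))
    (hd : Pairwise (Disjoint on U)) (hsU : s ⊆ ⋃ i, U i) : ∃ i, s ⊆ U i := by
  obtain ⟨x, hx⟩ := hne
  obtain ⟨i, hxi⟩ := mem_iUnion.1 (hsU hx)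
  refine ⟨i, hs.subset_left_of_subset_union (hU i) (v := ⋃ (j) (_ : j ≠ i), U j)
    (isOpen_biUnion fun j _ ↦ hU j) ?_ ?_ ⟨x, hx, hxi⟩⟩
  · simp only [disjoint_iUnion_right]
    exact fun j hji ↦ hd hji.symm
  · intro y hy
    obtain ⟨j, hyj⟩ := mem_iUnion.1 (hsU hy)
    by_cases hji : j = i
    · exact Or.inl (hji ▸ hyj)
    · exact Or.inr (mem_iUnion₂.2 ⟨j, hji, hyj⟩)

end Topology

namespace MarkovIFS

variable {m k : ℕ} (M : MarkovIFS m k)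

theorem disjoint_image_image {i i' : Fin k} {s t : Set (ℝ × ℝ)}
    (hs : s ⊆ M.D (M.dom i)) (ht : t ⊆ M.D (M.dom i')) (hst : i = i' → Disjoint s t) :
    Disjoint (M.f i '' s) (M.f i' '' t) := by
  by_cases hii : i = i'
  · subst hii
    exact (hst rfl).image (M.inj i) hs ht
  · exact (M.disjointImages i i' hii).mono (image_mono hs) (image_mono ht)

end MarkovIFS

theorem markovIFS_attracting_region_is_IFS_general {m k : ℕ} (M : MarkovIFS m k)
    (R : Set (ℝ × ℝ))
    (l : ℕ) (A : Fin l → Set (ℝ × ℝ))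
    (hAcpt : ∀ j, IsCompact (A j))
    (hAconn : ∀ j, IsConnected (A j))
    (hAdisj : ∀ j j', j ≠ j' → Disjoint (A j) (A j'))
    (hattr : ∀ (i : Fin k) (j : Fin l), A j ⊆ M.D (M.dom i) →
      M.f i '' A j ⊆ interior (⋃ j', A j') ∨ (M.f i '' A j) ∩ R = ∅) :
    (∀ (i : Fin k) (j : Fin l), A j ⊆ M.D (M.dom i) → M.f i '' A j ⊆ R →
      ∃ j', M.f i '' A j ⊆ interior (A j')) ∧
    (∀ (i i' : Fin k) (j j' : Fin l),
      A j ⊆ M.D (M.dom i) → A j' ⊆ M.D (M.dom i') →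
      M.f i '' A j ⊆ R → M.f i' '' A j' ⊆ R → (i, j) ≠ (i', j') →
      Disjoint (M.f i '' A j) (M.f i' '' A j')) := by
  refine ⟨fun i j hdom hR ↦ ?_, fun i i' j j' hdom hdom' _ _ hne ↦ ?_⟩
  · have hconn : IsConnected (M.f i '' A j) :=
      (hAconn j).image _ ((M.smooth i).continuousOn.mono hdom)
    have hmeetsR : (M.f i '' A j) ∩ R ≠ ∅ :=
      (hconn.nonempty.mono (subset_inter_iff.2 ⟨subset_rfl, hR⟩)).ne_empty
    have hint : M.f i '' A j ⊆ ⋃ j', interior (A j') := by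
      rw [← interior_iUnion_of_pairwise_disjoint_isClosed (fun j' ↦ (hAcpt j').isClosed) hAdisj]
      exact (hattr i j hdom).resolve_right hmeetsR
    exact hconn.isPreconnected.exists_subset_of_subset_iUnion hconn.nonempty
      (fun _ ↦ isOpen_interior) (fun a b hab ↦ (hAdisj a b hab).mono interior_subset interior_subset)
      hint
  · exact M.disjoint_image_image hdom hdom' fun hii ↦ hAdisj j j' fun hjj ↦ hne (by rw [hii, hjj])

/-- Let `A = ⋃ A_j` be an attracting region with respect to a
relatively repelling region `R`, with `A ⊆ Int(R)`, whose components `A_j` are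
nonempty disjoint compact connected discs. Then the restrictions `f_i|_{A_j}` with
`f_i(A_j) ⊆ R` define a Markov IFS with discs `{A_j}`: each such restriction maps its
disc into the interior of some `A_{j'}`, and images of distinct restrictions are
pairwise disjoint. -/
theorem markovIFS_attracting_region_is_IFS {m k : ℕ} (M : MarkovIFS m k)
    (R : Set (ℝ × ℝ)) (hR : M.RelRepelling R)
    (l : ℕ) (A : Fin l → Set (ℝ × ℝ))
    (hAcpt : ∀ j, IsCompact (A j)) (hAne : ∀ j, (A j).Nonempty)
    (hAconn : ∀ j, IsConnected (A j))
    (hAdisj : ∀ j j', j ≠ j' → Disjoint (A j) (A j'))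
    (hAintR : (⋃ j, A j) ⊆ relIntIn M.union R)
    (hattr : ∀ (i : Fin k) (j : Fin l), A j ⊆ M.D (M.dom i) →
      M.f i '' A j ⊆ interior (⋃ j', A j') ∨ (M.f i '' A j) ∩ R = ∅) :
    (∀ (i : Fin k) (j : Fin l), A j ⊆ M.D (M.dom i) → M.f i '' A j ⊆ R →
      ∃ j', M.f i '' A j ⊆ interior (A j')) ∧
    (∀ (i i' : Fin k) (j j' : Fin l),
      A j ⊆ M.D (M.dom i) → A j' ⊆ M.D (M.dom i') →
      M.f i '' A j ⊆ R → M.f i' '' A j' ⊆ R → (i, j) ≠ (i', j') →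
      Disjoint (M.f i '' A j) (M.f i' '' A j')) :=
  markovIFS_attracting_region_is_IFS_general M R l A hAcpt hAconn hAdisj hattr
end
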